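/- If X : U → ℝ³ \ {c} is a regular surface patch with first fundamental form I_X, then the inverse patch Y = Φ∘X has first fundamental form I_Y = λ²·I_X, where λ = r²/‖X−c‖². Concretely, E_Y = λ²E_X, F_Y = λ²F_X, G_Y = λ²G_X, where E,F,G denote the usual inner products of partial derivatives. -/

import Mathlib

open RealInnerProductSpace EuclideanGeometry

/-!
The differential of the inversion `Φ` at `p ≠ c` is `λ` times the reflection in the hyperplane
orthogonal to `p - c`, where `λ = r² / ‖p - c‖²`. A reflection preserves inner products, so by
the chain rule every inner product of partial derivatives of `Φ ∘ X` is `λ²` times the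
corresponding one of `X`.
-/

section

variable {E F : Type*} [NormedAddCommGroup E] [NormedSpace ℝ E]
  [NormedAddCommGroup F] [InnerProductSpace ℝ F]

theorem EuclideanGeometry.inversion_eq_add_smul (c : F) (r : ℝ) (p : F) :
    inversion c r p = c + (r ^ 2 / ‖p - c‖ ^ 2) • (p - c) := by
  rw [inversion, dist_eq_norm, div_pow, vsub_eq_sub, vadd_eq_add, add_comm]

theorem real_inner_smul_linearIsometryEquiv_apply (k : ℝ) (R : F ≃ₗᵢ[ℝ] F) (u v : F) :
    ⟪(k • (R : F →L[ℝ] F)) u, (k • (R : F →L[ℝ] F)) v⟫ = k ^ 2 * ⟪u, v⟫ := by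
  simp only [smul_apply, ContinuousLinearEquiv.coe_coe,
    LinearIsometryEquiv.coe_toContinuousLinearEquiv, real_inner_smul_right, real_inner_smul_left,
    LinearIsometryEquiv.inner_map_map]
  ring

theorem real_inner_fderiv_inversion_comp {X : E → F} {q : E} (c : F) (r : ℝ)
    (hX : DifferentiableAt ℝ X q) (hXc : X q ≠ c) (v w : E) :
    ⟪fderiv ℝ (inversion c r ∘ X) q v, fderiv ℝ (inversion c r ∘ X) q w⟫ =
      (r ^ 2 / ‖X q - c‖ ^ 2) ^ 2 * ⟪fderiv ℝ X q v, fderiv ℝ X q w⟫ := by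
  have hfderiv := ((hasFDerivAt_inversion (R := r) hXc).comp q hX.hasFDerivAt).fderiv
  rw [hfderiv, ContinuousLinearMap.comp_apply, ContinuousLinearMap.comp_apply,
    real_inner_smul_linearIsometryEquiv_apply, dist_eq_norm, div_pow]

end

theorem inverse_patch_first_fundamental_form_general
    (c : EuclideanSpace ℝ (Fin 3)) (r : ℝ)
    (Φ : EuclideanSpace ℝ (Fin 3) → EuclideanSpace ℝ (Fin 3))
    (hΦ : ∀ p, Φ p = c + (r ^ 2 / ‖p - c‖ ^ 2) • (p - c))
    (U : Set (ℝ × ℝ))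
    (X : ℝ × ℝ → EuclideanSpace ℝ (Fin 3))
    (hXdiff : ∀ q ∈ U, DifferentiableAt ℝ X q)
    (hXc : ∀ q ∈ U, X q ≠ c)
    (Y : ℝ × ℝ → EuclideanSpace ℝ (Fin 3)) (hY : Y = Φ ∘ X)
    (q : ℝ × ℝ) (hq : q ∈ U)
    (lam : ℝ) (hlam : lam = r ^ 2 / ‖X q - c‖ ^ 2) :
    ⟪fderiv ℝ Y q (1, 0), fderiv ℝ Y q (1, 0)⟫ =
        lam ^ 2 * ⟪fderiv ℝ X q (1, 0), fderiv ℝ X q (1, 0)⟫ ∧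
      ⟪fderiv ℝ Y q (1, 0), fderiv ℝ Y q (0, 1)⟫ =
        lam ^ 2 * ⟪fderiv ℝ X q (1, 0), fderiv ℝ X q (0, 1)⟫ ∧
      ⟪fderiv ℝ Y q (0, 1), fderiv ℝ Y q (0, 1)⟫ =
        lam ^ 2 * ⟪fderiv ℝ X q (0, 1), fderiv ℝ X q (0, 1)⟫ := by
  have hΦ_inversion : Φ = inversion c r :=
    funext fun p => (hΦ p).trans (inversion_eq_add_smul c r p).symm
  have hscale := real_inner_fderiv_inversion_comp c r (hXdiff q hq) (hXc q hq)
  subst hY hΦ_inversion hlam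
  exact ⟨hscale _ _, hscale _ _, hscale _ _⟩

/-- If `X` is a regular surface patch avoiding the center `c` of the inversion `Φ[c,r]`,
then the inverse patch `Y = Φ ∘ X` has first fundamental form `I_Y = λ² I_X`,
where `λ = r²/‖X−c‖²`: concretely `E_Y = λ²E_X`, `F_Y = λ²F_X`, `G_Y = λ²G_X`. -/
theorem inverse_patch_first_fundamental_form
    (c : EuclideanSpace ℝ (Fin 3)) (r : ℝ) (hr : 0 < r)
    (Φ : EuclideanSpace ℝ (Fin 3) → EuclideanSpace ℝ (Fin 3))
    (hΦ : ∀ p, Φ p = c + (r ^ 2 / ‖p - c‖ ^ 2) • (p - c))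
    (U : Set (ℝ × ℝ)) (hU : IsOpen U)
    (X : ℝ × ℝ → EuclideanSpace ℝ (Fin 3))
    (hXdiff : ∀ q ∈ U, DifferentiableAt ℝ X q)
    (hXc : ∀ q ∈ U, X q ≠ c)
    (hXreg : ∀ q ∈ U, LinearMap.ker (fderiv ℝ X q).toLinearMap = ⊥)
    (Y : ℝ × ℝ → EuclideanSpace ℝ (Fin 3)) (hY : Y = Φ ∘ X)
    (q : ℝ × ℝ) (hq : q ∈ U)
    (lam : ℝ) (hlam : lam = r ^ 2 / ‖X q - c‖ ^ 2) :
    ⟪fderiv ℝ Y q (1, 0), fderiv ℝ Y q (1, 0)⟫ =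
        lam ^ 2 * ⟪fderiv ℝ X q (1, 0), fderiv ℝ X q (1, 0)⟫ ∧
      ⟪fderiv ℝ Y q (1, 0), fderiv ℝ Y q (0, 1)⟫ =
        lam ^ 2 * ⟪fderiv ℝ X q (1, 0), fderiv ℝ X q (0, 1)⟫ ∧
      ⟪fderiv ℝ Y q (0, 1), fderiv ℝ Y q (0, 1)⟫ =
        lam ^ 2 * ⟪fderiv ℝ X q (0, 1), fderiv ℝ X q (0, 1)⟫ :=
  inverse_patch_first_fundamental_form_general c r Φ hΦ U X hXdiff hXc Y hY q hq lam hlam
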